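/- arXiv:2512.05676 — 2 statements merged into one kernel-verified Lean document; each statement's English description precedes it below -/
import Mathlib

section
/- For all d ∈ (0, π/2), α ≥ 1, λ ≥ 1, and for all z on the boundary curve of the region D_d = {w ∈ ℂ : |arg(w + √(1+w²))| < d} (parametrized by z = sinh(x ± i d), x ∈ ℝ), it holds that λ / |α + i z + λ|² ≤ λ⁻¹ / cos(d)². -/
/-!
Writing `t = α + λ`, `S = sin d`, `C = cos d` and `c = cosh x`, the identities `cosh² - sinh² = 1`
and `sin² + cos² = 1` turn `|α + i sinh(x ± i d) + λ|²` into the sum of squares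
`(c ∓ t S)² + (t² - 1) C²`, which is at least `(t² - 1) C² ≥ λ² C²` because `α ≥ 1`.
-/

open Complex

theorem Complex.norm_sq_ofReal_add_I_mul_sinh (a y θ : ℝ) :
    ‖(a : ℂ) + I * sinh (y + θ * I)‖ ^ 2
      = (Real.cosh y - a * Real.sin θ) ^ 2 + (a ^ 2 - 1) * Real.cos θ ^ 2 := by
  have hsinh : sinh (y + θ * I)
      = (Real.sinh y * Real.cos θ : ℝ) + (Real.cosh y * Real.sin θ : ℝ) * I := by
    rw [sinh_add, sinh_mul_I, cosh_mul_I]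
    push_cast [ofReal_sinh, ofReal_cosh, ofReal_sin, ofReal_cos]
    ring
  have hsplit : (a : ℂ) + I * sinh (y + θ * I)
      = (a - Real.cosh y * Real.sin θ : ℝ) + (Real.sinh y * Real.cos θ : ℝ) * I := by
    rw [hsinh]
    simp only [ofReal_sub, ofReal_mul, ofReal_cosh, ofReal_sin]
    linear_combination (cosh (y : ℂ) * sin (θ : ℂ)) * I_sq
  rw [hsplit, Complex.sq_norm, normSq_add_mul_I]
  linear_combination (Real.cosh y ^ 2 - a ^ 2) * Real.sin_sq_add_cos_sq θ
    - Real.cos θ ^ 2 * Real.cosh_sq_sub_sinh_sq y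

theorem Complex.sq_sub_one_mul_cos_sq_le_norm_sq_ofReal_add_I_mul_sinh (a y θ : ℝ) :
    (a ^ 2 - 1) * Real.cos θ ^ 2 ≤ ‖(a : ℂ) + I * sinh (y + θ * I)‖ ^ 2 := by
  rw [norm_sq_ofReal_add_I_mul_sinh]
  exact le_add_of_nonneg_left (sq_nonneg _)

theorem boundary_sup_estimate (d α lam : ℝ) (hd0 : 0 < d) (hd : d < Real.pi / 2)
    (hα : 1 ≤ α) (hlam : 1 ≤ lam) (x : ℝ) (s : ℝ) (hs : s = 1 ∨ s = -1) :
    lam / ‖(α : ℂ) + Complex.I * Complex.sinh ((x : ℂ) + s * Complex.I * d) + lam‖ ^ 2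
      ≤ lam⁻¹ / Real.cos d ^ 2 := by
  have hcos : 0 < Real.cos d := Real.cos_pos_of_mem_Ioo ⟨by linarith [Real.pi_pos], hd⟩
  have hcos_sd : Real.cos (s * d) ^ 2 = Real.cos d ^ 2 := by
    rcases hs with rfl | rfl <;> simp
  have hz : (α : ℂ) + I * sinh ((x : ℂ) + s * I * d) + lam
      = ((α + lam : ℝ) : ℂ) + I * sinh (x + (s * d : ℝ) * I) := by
    rw [mul_right_comm (s : ℂ) I]
    push_cast
    ring
  have hlower := sq_sub_one_mul_cos_sq_le_norm_sq_ofReal_add_I_mul_sinh (α + lam) x (s * d)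
  rw [hcos_sd, ← hz] at hlower
  have hcoef : lam ^ 2 ≤ (α + lam) ^ 2 - 1 := by nlinarith
  have hpos : 0 < lam ^ 2 * Real.cos d ^ 2 := by positivity
  calc lam / ‖(α : ℂ) + I * sinh ((x : ℂ) + s * I * d) + lam‖ ^ 2
      ≤ lam / (lam ^ 2 * Real.cos d ^ 2) := by
        gcongr
        exact (mul_le_mul_of_nonneg_right hcoef (sq_nonneg _)).trans hlower
    _ = lam⁻¹ / Real.cos d ^ 2 := by field_simp
end

section
/- For all d ∈ (0, π/2), α ≥ 1, and λ ≥ 1, the contour integral Θ_{α,λ} = ∫_{∂D_d} |dz| / |α + i z + λ|², with ∂D_d parametrized by z = sinh(x ± i d), x ∈ ℝ, satisfies Θ_{α,λ} ≤ C λ⁻¹ / cos(d)^{3/2} for a constant C independent of α, λ, d. -/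
/-!
On the branch `z = sinh (x + i d)`, with `c = cos d`, `A = α + λ` and `B = c² (A² - 1)`,
`|dz| = √(sinh² x + c²) dx ≤ (|sinh x| + c / cosh x) dx` and
`|A + i z|² = (cosh x - A sin d)² + B`. The `|sinh x|` part is the derivative of an arctangent
of `cosh x`, so it integrates to at most `2π / √B`; in the other part the denominator is at least
`B`, and `∫ sech = π`. As `α ≥ 1` gives `B ≥ (c λ)²`, each branch is at most `3π / (c λ)`, and
`c^{3/2} ≤ c`.
-/

open Complex MeasureTheory Filter Set Topology
open scoped Real

theorem integrable_comp_abs_of_integrableOn_Ioi {E : Type*} [NormedAddCommGroup E] {f : ℝ → E}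
    (hf : IntegrableOn f (Ioi 0)) : Integrable fun x => f |x| := by
  have hIoi : IntegrableOn (fun x => f |x|) (Ioi 0) :=
    hf.congr_fun (fun x hx => by rw [abs_of_pos hx]) measurableSet_Ioi
  have hIic : IntegrableOn (fun x => f |x|) (Iic 0) := by
    let neg : MeasurableEmbedding fun x : ℝ => -x := (Homeomorph.neg ℝ).measurableEmbedding
    rw [← Measure.map_neg_eq_self (volume : Measure ℝ), neg.integrableOn_map_iff]
    simp_rw [Function.comp_def, abs_neg, neg_preimage, neg_Iic, neg_zero]
    exact Iff.mpr integrableOn_Ici_iff_integrableOn_Ioi hIoi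
  simpa only [Iic_union_Ioi, integrableOn_univ] using hIic.union hIoi

namespace Real

theorem tendsto_sinh_atTop : Tendsto sinh atTop atTop :=
  tendsto_atTop_mono' atTop ((eventually_ge_atTop 0).mono fun _ hx => self_le_sinh_iff.2 hx)
    tendsto_id

theorem tendsto_cosh_atTop : Tendsto cosh atTop atTop :=
  tendsto_atTop_mono (fun x => (sinh_lt_cosh x).le) tendsto_sinh_atTop

theorem hasDerivAt_arctan_sinh (x : ℝ) :
    HasDerivAt (fun x => arctan (sinh x)) (cosh x)⁻¹ x := by
  refine ((hasDerivAt_arctan' (sinh x)).comp x (hasDerivAt_sinh x)).congr_deriv ?_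
  rw [← cosh_sq', sq, mul_inv, inv_mul_cancel_right₀ (cosh_pos x).ne']

theorem tendsto_arctan_sinh_atTop : Tendsto (fun x => arctan (sinh x)) atTop (𝓝 (π / 2)) :=
  (tendsto_arctan_atTop.mono_right nhdsWithin_le_nhds).comp tendsto_sinh_atTop

theorem integrableOn_Ioi_inv_cosh : IntegrableOn (fun x => (cosh x)⁻¹) (Ioi 0) :=
  integrableOn_Ioi_deriv_of_nonneg' (fun x _ => hasDerivAt_arctan_sinh x)
    (fun x _ => (inv_pos.2 (cosh_pos x)).le) tendsto_arctan_sinh_atTop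

theorem integral_Ioi_inv_cosh : ∫ x in Ioi 0, (cosh x)⁻¹ = π / 2 := by
  rw [integral_Ioi_of_hasDerivAt_of_nonneg' (fun x _ => hasDerivAt_arctan_sinh x)
    (fun x _ => (inv_pos.2 (cosh_pos x)).le) tendsto_arctan_sinh_atTop]
  simp

section ArctanCosh

variable {B : ℝ} (M : ℝ)

theorem hasDerivAt_arctan_cosh_sub_div (hB : 0 < B) (x : ℝ) :
    HasDerivAt (fun x => arctan ((cosh x - M) / √B) / √B)
      (sinh x / ((cosh x - M) ^ 2 + B)) x := by
  have hsqrt : 0 < √B := sqrt_pos.2 hB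
  refine (((hasDerivAt_arctan' _).comp x
    (((hasDerivAt_cosh x).sub_const M).div_const √B)).div_const √B).congr_deriv ?_
  field_simp
  rw [sq_sqrt hB.le]
  ring

theorem tendsto_arctan_cosh_sub_div (hB : 0 < B) :
    Tendsto (fun x => arctan ((cosh x - M) / √B) / √B) atTop (𝓝 (π / 2 / √B)) := by
  have hcosh : Tendsto (fun x => (cosh x - M) / √B) atTop atTop :=
    (tendsto_atTop_add_const_right _ (-M) tendsto_cosh_atTop).atTop_div_const (sqrt_pos.2 hB)
  exact ((tendsto_arctan_atTop.mono_right nhdsWithin_le_nhds).comp hcosh).div_const _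

theorem sinh_div_sq_add_nonneg (hB : 0 < B) {x : ℝ} (hx : x ∈ Ioi 0) :
    0 ≤ sinh x / ((cosh x - M) ^ 2 + B) :=
  div_nonneg (sinh_nonneg_iff.2 (le_of_lt hx)) (by positivity)

theorem integrableOn_Ioi_sinh_div_sq_add (hB : 0 < B) :
    IntegrableOn (fun x => sinh x / ((cosh x - M) ^ 2 + B)) (Ioi 0) :=
  integrableOn_Ioi_deriv_of_nonneg' (fun x _ => hasDerivAt_arctan_cosh_sub_div M hB x)
    (fun _ hx => sinh_div_sq_add_nonneg M hB hx) (tendsto_arctan_cosh_sub_div M hB)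

theorem integral_Ioi_sinh_div_sq_add_le (hB : 0 < B) :
    ∫ x in Ioi 0, sinh x / ((cosh x - M) ^ 2 + B) ≤ π / √B := by
  rw [integral_Ioi_of_hasDerivAt_of_nonneg' (fun x _ => hasDerivAt_arctan_cosh_sub_div M hB x)
    (fun _ hx => sinh_div_sq_add_nonneg M hB hx) (tendsto_arctan_cosh_sub_div M hB)]
  have := neg_pi_div_two_lt_arctan ((cosh 0 - M) / √B)
  have hsqrt : 0 < √B := sqrt_pos.2 hB
  rw [div_sub_div_same, div_le_div_iff_of_pos_right hsqrt]
  linarith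

end ArctanCosh

noncomputable def branchMajorant (M B c x : ℝ) : ℝ :=
  sinh x / ((cosh x - M) ^ 2 + B) + c / B * (cosh x)⁻¹

theorem integrable_branchMajorant_abs {B : ℝ} (hB : 0 < B) (M c : ℝ) :
    Integrable fun x => branchMajorant M B c |x| :=
  integrable_comp_abs_of_integrableOn_Ioi
    ((integrableOn_Ioi_sinh_div_sq_add M hB).add (integrableOn_Ioi_inv_cosh.const_mul (c / B)))

theorem integral_branchMajorant_abs_le {B : ℝ} (hB : 0 < B) (M c : ℝ) :
    ∫ x, branchMajorant M B c |x| ≤ 2 * (π / √B) + π * c / B := by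
  rw [integral_comp_abs (f := branchMajorant M B c)]
  unfold branchMajorant
  rw [integral_add
    (integrableOn_Ioi_sinh_div_sq_add M hB) (integrableOn_Ioi_inv_cosh.const_mul (c / B)),
    integral_const_mul, integral_Ioi_inv_cosh]
  have := integral_Ioi_sinh_div_sq_add_le M hB
  linarith [show c / B * (π / 2) = π * c / B / 2 by ring]

theorem abs_sinh_le_cosh (x : ℝ) : |sinh x| ≤ cosh x :=
  (abs_sinh x).trans_le ((sinh_lt_cosh _).le.trans_eq (cosh_abs x))

theorem sqrt_sinh_sq_add_sq_le {c : ℝ} (hc0 : 0 ≤ c) (hc1 : c ≤ 1) (x : ℝ) :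
    √(sinh x ^ 2 + c ^ 2) ≤ |sinh x| + c / cosh x := by
  -- with `t = c / cosh x`, `c² = t² (1 + sinh² x)` and `t |sinh x| ≤ c ≤ 1`
  set t := c / cosh x
  have hc : c = t * cosh x := (div_mul_cancel₀ c (cosh_pos x).ne').symm
  have ht : 0 ≤ t := by positivity
  have hts : t * |sinh x| ≤ 1 :=
    (mul_le_mul_of_nonneg_left (abs_sinh_le_cosh x) ht).trans (hc ▸ hc1)
  refine sqrt_le_iff.2 ⟨by positivity, ?_⟩
  rw [hc, mul_pow, cosh_sq, ← sq_abs (sinh x)]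
  nlinarith [mul_nonneg ht (abs_nonneg (sinh x))]

end Real

namespace Complex

theorem norm_cosh_add_I_mul (x d : ℝ) :
    ‖cosh (x + I * d)‖ = √(Real.sinh x ^ 2 + Real.cos d ^ 2) := by
  have h : cosh (x + I * d) =
      (Real.cosh x * Real.cos d : ℝ) + (Real.sinh x * Real.sin d : ℝ) * I := by
    rw [mul_comm I, cosh_add, cosh_mul_I, sinh_mul_I]
    push_cast
    ring
  rw [h, norm_def, normSq_add_mul_I]
  congr 1
  linear_combination Real.cos d ^ 2 * Real.cosh_sq x + Real.sinh x ^ 2 * Real.sin_sq_add_cos_sq d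

theorem norm_ofReal_add_I_mul_sinh_sq (a x d : ℝ) :
    ‖(a : ℂ) + I * sinh (x + I * d)‖ ^ 2 =
      (Real.cosh x - Real.sin d * a) ^ 2 + Real.cos d ^ 2 * (a ^ 2 - 1) := by
  have h : (a : ℂ) + I * sinh (x + I * d) =
      (a - Real.sin d * Real.cosh x : ℝ) + (Real.cos d * Real.sinh x : ℝ) * I := by
    rw [mul_comm I (d : ℂ), sinh_add, sinh_mul_I, cosh_mul_I]
    push_cast
    linear_combination cosh (x : ℂ) * sin (d : ℂ) * I_sq
  rw [h, Complex.sq_norm, normSq_add_mul_I]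
  linear_combination (Real.cosh x ^ 2 - a ^ 2) * Real.sin_sq_add_cos_sq d -
    Real.cos d ^ 2 * Real.cosh_sq_sub_sinh_sq x

theorem norm_cosh_div_norm_sq_le_branchMajorant {a d : ℝ} (hc : 0 < Real.cos d) (ha : 1 < a)
    (x : ℝ) :
    ‖cosh (x + I * d)‖ / ‖(a : ℂ) + I * sinh (x + I * d)‖ ^ 2 ≤
      Real.branchMajorant (Real.sin d * a) (Real.cos d ^ 2 * (a ^ 2 - 1)) (Real.cos d) |x| := by
  rw [norm_cosh_add_I_mul, norm_ofReal_add_I_mul_sinh_sq, Real.branchMajorant,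
    ← Real.abs_sinh, Real.cosh_abs]
  set c := Real.cos d
  set B := c ^ 2 * (a ^ 2 - 1)
  set Q := (Real.cosh x - Real.sin d * a) ^ 2 + B
  have hB : 0 < B := mul_pos (pow_pos hc 2) (by nlinarith)
  have hBQ : B ≤ Q := le_add_of_nonneg_left (sq_nonneg _)
  calc √(Real.sinh x ^ 2 + c ^ 2) / Q ≤ (|Real.sinh x| + c / Real.cosh x) / Q := by
        gcongr
        exact Real.sqrt_sinh_sq_add_sq_le hc.le (Real.cos_le_one d) x
    _ = |Real.sinh x| / Q + c / Real.cosh x / Q := add_div _ _ _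
    _ ≤ |Real.sinh x| / Q + c / Real.cosh x / B := by gcongr
    _ = |Real.sinh x| / Q + c / B * (Real.cosh x)⁻¹ := by
        rw [div_right_comm, div_eq_mul_inv (c / B)]

theorem integral_norm_cosh_div_norm_sq_le {d α lam : ℝ} (hc : 0 < Real.cos d) (hα : 1 ≤ α)
    (hlam : 1 ≤ lam) :
    ∫ x : ℝ, ‖cosh (x + I * d)‖ / ‖(α : ℂ) + I * sinh (x + I * d) + lam‖ ^ 2 ≤
      3 * π / (Real.cos d * lam) := by
  set c := Real.cos d
  set M := Real.sin d * (α + lam)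
  set B := c ^ 2 * ((α + lam) ^ 2 - 1)
  have hcl : 0 < c * lam := by positivity
  have hB : (c * lam) ^ 2 ≤ B := by
    rw [mul_pow]
    exact mul_le_mul_of_nonneg_left (by nlinarith) (sq_nonneg c)
  have hBpos : 0 < B := (pow_pos hcl 2).trans_le hB
  have hpointwise (x : ℝ) : ‖cosh (x + I * d)‖ / ‖(α : ℂ) + I * sinh (x + I * d) + lam‖ ^ 2 ≤
      Real.branchMajorant M B c |x| := by
    rw [add_right_comm, ← ofReal_add]
    exact norm_cosh_div_norm_sq_le_branchMajorant hc (by linarith) x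
  calc _ ≤ ∫ x, Real.branchMajorant M B c |x| :=
        integral_mono_of_nonneg (Eventually.of_forall fun x => by positivity)
          (Real.integrable_branchMajorant_abs hBpos M c) (Eventually.of_forall hpointwise)
    _ ≤ 2 * (π / √B) + π * c / B := Real.integral_branchMajorant_abs_le hBpos M c
    _ ≤ 2 * (π / (c * lam)) + π * c / (c * lam) ^ 2 := by
        gcongr
        exact (Real.le_sqrt hcl.le hBpos.le).2 hB
    _ = 2 * (π / (c * lam)) + π / (c * lam) / lam := by field_simp
    _ ≤ 2 * (π / (c * lam)) + π / (c * lam) :=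
        add_le_add_right (div_le_self (by positivity : 0 ≤ π / (c * lam)) hlam) _
    _ = 3 * π / (c * lam) := by ring

end Complex

/-- The contour integral `Θ_{α,λ} = ∫_{∂D_d} |dz| / |α + i z + λ|²`, with the boundary
parametrized by `z = sinh(x ± i d)` (so `|dz| = |cosh(x ± i d)| dx`), is bounded by
`C λ⁻¹ / cos(d)^{3/2}` with `C` independent of `α`, `λ`, and `d`. -/
theorem contour_integral_estimate :
    ∃ C : ℝ, 0 < C ∧ ∀ (d α lam : ℝ), 0 < d → d < Real.pi / 2 → 1 ≤ α → 1 ≤ lam →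
      (∫ x : ℝ, ‖Complex.cosh ((x : ℂ) + Complex.I * d)‖ /
          ‖(α : ℂ) + Complex.I * Complex.sinh ((x : ℂ) + Complex.I * d) + lam‖ ^ 2)
        + (∫ x : ℝ, ‖Complex.cosh ((x : ℂ) - Complex.I * d)‖ /
          ‖(α : ℂ) + Complex.I * Complex.sinh ((x : ℂ) - Complex.I * d) + lam‖ ^ 2)
        ≤ C * lam⁻¹ / Real.cos d ^ ((3 : ℝ) / 2) := by
  refine ⟨6 * π, by positivity, fun d α lam hd0 hd hα hlam => ?_⟩
  have hc : 0 < Real.cos d := Real.cos_pos_of_mem_Ioo ⟨by linarith [Real.pi_pos], hd⟩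
  have hplus := integral_norm_cosh_div_norm_sq_le hc hα hlam
  have hminus := integral_norm_cosh_div_norm_sq_le (d := -d) (by rwa [Real.cos_neg]) hα hlam
  simp only [ofReal_neg, mul_neg, ← sub_eq_add_neg, Real.cos_neg] at hminus
  have hcpow : Real.cos d ^ ((3 : ℝ) / 2) ≤ Real.cos d :=
    Real.rpow_le_self_of_le_one hc.le (Real.cos_le_one d) (by norm_num)
  calc _ ≤ 3 * π / (Real.cos d * lam) + 3 * π / (Real.cos d * lam) :=
        add_le_add hplus hminus
    _ = 6 * π * lam⁻¹ / Real.cos d := by field_simp; ring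
    _ ≤ 6 * π * lam⁻¹ / Real.cos d ^ ((3 : ℝ) / 2) := by gcongr
end
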